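/- Let m, u, v be rational numbers with u ≠ 0, m ≠ 1, m ≠ −1, satisfying v^2 = φ(u), where φ(u) = (m^6 − 26m^4 − 31m^2 − 8)(m+1)^2·u^4 − 4m(m+1)(m^2+3)(m^4 − 6m^2 − 3)·u^3 + 2(m−1)(m+1)(3m^6 + 28m^4 + 31m^2 + 2)·u^2 − 4m(m−1)(m^2+3)(m^4 + 6m^2 + 1)·u + m^2(m+1)^2(m−1)^4. Define U = [6(m−1)(m+1)(3m^6 + 28m^4 + 31m^2 + 2)·u^2 − 36m(m−1)(m^2+3)(m^4 + 6m^2 + 1)·u + 18m(m+1)(m−1)^2·v + 18m^2(m+1)^2(m−1)^4] / u^2 and V = −108m·[m(m^2+3)(m^4 − 6m^2 − 3)(m−1)^2(m+1)^2·u^3 − (3m^6 + 28m^4 + 31m^2 + 2)(m+1)^2(m−1)^3·u^2 + (m−1)(m^2+3)(m^4 + 6m^2 + 1)·u·v + 3m(m+1)(m^2+3)(m^4 + 6m^2 + 1)(m−1)^3·u − m(m+1)^2(m−1)^4·v − m^2(m+1)^3(m−1)^6] / u^3. Then V^2 = U^3 − 432(m−1)(m+1)(325m^10 + 955m^8 +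 1266m^6 + 470m^4 + 57m^2 − 1)·U − 3456(5m^4 + 2m^2 + 1)(875m^10 + 2885m^8 + 3822m^6 + 1450m^4 + 183m^2 + 1)(m−1)^2(m+1)^2. -/

import Mathlib

/-!
For a quartic `a u⁴ + b u³ + c u² + d u + q²` whose constant term is a square, the point `(0, q)`
of `v² = a u⁴ + ⋯ + q²` is rational, and the classical map sending the quartic to the cubic
`Y² = X³ - 27 I X - 27 J`, with `I`, `J` the invariants of the quartic, is given by polynomial
formulas in `u`, `v` divided by `u²` and `u³`. The displayed map is this one for the quartic `φ`,
with `q = m (m + 1) (m - 1)²`, and the Weierstrass coefficients are `27 I(φ)` and `27 J(φ)`.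
-/

section QuarticInvariants

variable {R : Type*} [CommRing R]

def quarticInvI (a b c d e : R) : R :=
  12 * a * e - 3 * b * d + c ^ 2

def quarticInvJ (a b c d e : R) : R :=
  72 * a * c * e + 9 * b * c * d - 27 * a * d ^ 2 - 27 * e * b ^ 2 - 2 * c ^ 3

theorem quartic_weierstrass_homogeneous {a b c d q u v : R}
    (h : v ^ 2 = a * u ^ 4 + b * u ^ 3 + c * u ^ 2 + d * u + q ^ 2) :
    (27 * (q * b * u ^ 3 + 2 * q * c * u ^ 2 + 3 * q * d * u + d * u * v +
        4 * q ^ 2 * v + 4 * q ^ 3)) ^ 2 =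
      (3 * c * u ^ 2 + 9 * d * u + 18 * q * v + 18 * q ^ 2) ^ 3 -
        27 * quarticInvI a b c d (q ^ 2) *
          (3 * c * u ^ 2 + 9 * d * u + 18 * q * v + 18 * q ^ 2) * u ^ 4 -
        27 * quarticInvJ a b c d (q ^ 2) * u ^ 6 := by
  unfold quarticInvI quarticInvJ
  linear_combination 729 * (d ^ 2 * u ^ 2 - 4 * q ^ 2 * u * (d + c * u) - 8 * q ^ 3 * (v + q)) * h

end QuarticInvariants

theorem quartic_to_weierstrass {K : Type*} [Field K] {a b c d q u v : K} (hu : u ≠ 0)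
    (h : v ^ 2 = a * u ^ 4 + b * u ^ 3 + c * u ^ 2 + d * u + q ^ 2) :
    (27 * (q * b * u ^ 3 + 2 * q * c * u ^ 2 + 3 * q * d * u + d * u * v +
        4 * q ^ 2 * v + 4 * q ^ 3) / u ^ 3) ^ 2 =
      ((3 * c * u ^ 2 + 9 * d * u + 18 * q * v + 18 * q ^ 2) / u ^ 2) ^ 3 -
        27 * quarticInvI a b c d (q ^ 2) *
          ((3 * c * u ^ 2 + 9 * d * u + 18 * q * v + 18 * q ^ 2) / u ^ 2) -
        27 * quarticInvJ a b c d (q ^ 2) := by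
  field_simp
  linear_combination quartic_weierstrass_homogeneous h

theorem stmt_19 (m u v U V : ℚ) (hu : u ≠ 0)
    (hv : v ^ 2 =
      (m ^ 6 - 26 * m ^ 4 - 31 * m ^ 2 - 8) * (m + 1) ^ 2 * u ^ 4 -
        4 * m * (m + 1) * (m ^ 2 + 3) * (m ^ 4 - 6 * m ^ 2 - 3) * u ^ 3 +
        2 * (m - 1) * (m + 1) * (3 * m ^ 6 + 28 * m ^ 4 + 31 * m ^ 2 + 2) * u ^ 2 -
        4 * m * (m - 1) * (m ^ 2 + 3) * (m ^ 4 + 6 * m ^ 2 + 1) * u +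
        m ^ 2 * (m + 1) ^ 2 * (m - 1) ^ 4)
    (hU : U =
      (6 * (m - 1) * (m + 1) * (3 * m ^ 6 + 28 * m ^ 4 + 31 * m ^ 2 + 2) * u ^ 2 -
        36 * m * (m - 1) * (m ^ 2 + 3) * (m ^ 4 + 6 * m ^ 2 + 1) * u +
        18 * m * (m + 1) * (m - 1) ^ 2 * v +
        18 * m ^ 2 * (m + 1) ^ 2 * (m - 1) ^ 4) / u ^ 2)
    (hV : V = -108 * m *
      (m * (m ^ 2 + 3) * (m ^ 4 - 6 * m ^ 2 - 3) * (m - 1) ^ 2 * (m + 1) ^ 2 * u ^ 3 -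
        (3 * m ^ 6 + 28 * m ^ 4 + 31 * m ^ 2 + 2) * (m + 1) ^ 2 * (m - 1) ^ 3 * u ^ 2 +
        (m - 1) * (m ^ 2 + 3) * (m ^ 4 + 6 * m ^ 2 + 1) * u * v +
        3 * m * (m + 1) * (m ^ 2 + 3) * (m ^ 4 + 6 * m ^ 2 + 1) * (m - 1) ^ 3 * u -
        m * (m + 1) ^ 2 * (m - 1) ^ 4 * v -
        m ^ 2 * (m + 1) ^ 3 * (m - 1) ^ 6) / u ^ 3) :
    V ^ 2 = U ^ 3 -
      432 * (m - 1) * (m + 1) *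
        (325 * m ^ 10 + 955 * m ^ 8 + 1266 * m ^ 6 + 470 * m ^ 4 +
          57 * m ^ 2 - 1) * U -
      3456 * (5 * m ^ 4 + 2 * m ^ 2 + 1) *
        (875 * m ^ 10 + 2885 * m ^ 8 + 3822 * m ^ 6 + 1450 * m ^ 4 +
          183 * m ^ 2 + 1) * (m - 1) ^ 2 * (m + 1) ^ 2 := by
  have key := quartic_to_weierstrass hu (v := v) (q := m * (m + 1) * (m - 1) ^ 2)
    (a := (m ^ 6 - 26 * m ^ 4 - 31 * m ^ 2 - 8) * (m + 1) ^ 2)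
    (b := -(4 * m * (m + 1) * (m ^ 2 + 3) * (m ^ 4 - 6 * m ^ 2 - 3)))
    (c := 2 * (m - 1) * (m + 1) * (3 * m ^ 6 + 28 * m ^ 4 + 31 * m ^ 2 + 2))
    (d := -(4 * m * (m - 1) * (m ^ 2 + 3) * (m ^ 4 + 6 * m ^ 2 + 1)))
    (by linear_combination hv)
  unfold quarticInvI quarticInvJ at key
  subst hU hV
  linear_combination key
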